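/- Let N ≥ 1, X a real normed space, C ⊆ X a nonempty bounded convex subset with diameter at most M for some M > 0, T_1,…,T_N : C → C nonexpansive mappings extended cyclically by T_n := T_{((n−1) mod N)+1}, (λ_n)_{n≥1} a sequence in [0,1], u ∈ C, and let (x_n) be the cyclic Halpern iteration: x_0 = u, x_{n+1} = λ_{n+1}·u + (1 − λ_{n+1})·T_{n+1}x_n. Assume θ : ℤ₊ → ℤ₊ is a rate of divergence for ∑_{n≥1} λ_n, γ : (0,∞) → ℤ₊ is a Cauchy modulus for ∑_{n≥1} |λ_{n+N} − λ_n|, and α : (0,∞) → ℤ₊ satisfies λ_{n+1} ≤ ε for all ε > 0 and all n ≥ α(ε). Then ‖x_n − x_{n+N}‖ ≤ ε for all n ≥ Φ̃(ε) := θ(γ(ε/(4M)) + max{⌈ln(4M/ε)⌉, 1}), and ‖x_n − T_{n+N}⋯T_{n+1}x_n‖ ≤ ε for all n ≥ Φ(ε) := max{Φ̃(ε/2), α(ε/(4MN))}. -/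

import Mathlib

/-!
With `d n = ‖x (n + N) - x n‖`, periodicity `T (n + N) = T n` gives the recursive inequality
`d (n + 1) ≤ (1 - λ (n + 1)) * d n + 2 M |λ (n + 1 + N) - λ (n + 1)|`. Unrolled from
`n₀ = γ (ε / 4M)`, it bounds `d` by `M exp (-∑ λ j) + 2 M ∑ |λ (j + N) - λ j|`: the rate of
divergence makes the exponential at most `ε / 4M`, the Cauchy modulus does the same for the sum.
For the second rate, `x (n + N)` and `T (n + N) ⋯ T (n + 1) (x n)` are obtained by the same maps,
except that each Halpern step also moves towards `u`; their distance is therefore at most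
`M ∑_{j ≤ N} λ (n + j)`, which is small once `n ≥ α (ε / 4MN)`.
-/

/-- `iterComp T n N z` is the composition `T (n+N) (T (n+N-1) (⋯ (T (n+1) z)))`. -/
def iterComp {Y : Type*} (T : ℕ → Y → Y) (n : ℕ) : ℕ → Y → Y
  | 0, z => z
  | (k + 1), z => T (n + k + 1) (iterComp T n k z)

open Finset

section Cyclic

variable {α : Type*} {T : ℕ → α} {N : ℕ}

theorem forall_of_cyclic {P : α → Prop} (hN : 1 ≤ N) (hcyc : ∀ n, 1 ≤ n → T n = T ((n - 1) % N + 1))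
    (hP : ∀ i, 1 ≤ i → i ≤ N → P (T i)) : ∀ n, 1 ≤ n → P (T n) := by
  intro n hn
  rw [hcyc n hn]
  exact hP _ (Nat.le_add_left 1 _) (Nat.mod_lt _ hN)

theorem cyclic_add_period (hcyc : ∀ n, 1 ≤ n → T n = T ((n - 1) % N + 1)) {n : ℕ} (hn : 1 ≤ n) :
    T (n + N) = T n := by
  rw [hcyc n hn, hcyc (n + N) (by omega), show n + N - 1 = n - 1 + N by omega, Nat.add_mod_right]

end Cyclic

theorem norm_smul_add_one_sub_smul_sub_le {E : Type*} [SeminormedAddCommGroup E] [NormedSpace ℝ E]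
    {a : ℝ} (ha : a ≤ 1) (b : ℝ) (u p q : E) :
    ‖(a • u + (1 - a) • p) - (b • u + (1 - b) • q)‖ ≤ |a - b| * ‖u - q‖ + (1 - a) * ‖p - q‖ := by
  have key : (a • u + (1 - a) • p) - (b • u + (1 - b) • q)
      = (a - b) • (u - q) + (1 - a) • (p - q) := by
    module
  rw [key]
  refine (norm_add_le _ _).trans_eq ?_
  rw [norm_smul, norm_smul, Real.norm_eq_abs, Real.norm_eq_abs, abs_of_nonneg (sub_nonneg.2 ha)]

theorem le_prod_mul_add_sum_of_le_one_sub_mul_add {d c lam : ℕ → ℝ}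
    (hlam : ∀ n, 1 ≤ n → lam n ∈ Set.Icc (0 : ℝ) 1) (hc : ∀ n, 0 ≤ c n)
    (hrec : ∀ n, d (n + 1) ≤ (1 - lam (n + 1)) * d n + c (n + 1)) (n₀ k : ℕ) :
    d (n₀ + k) ≤ d n₀ * ∏ j ∈ Icc (n₀ + 1) (n₀ + k), (1 - lam j)
      + ∑ j ∈ Icc (n₀ + 1) (n₀ + k), c j := by
  induction k with
  | zero => simp
  | succ k ih =>
    rw [← add_assoc, prod_Icc_succ_top (by omega), sum_Icc_succ_top (by omega)]
    obtain ⟨hl₀, hl₁⟩ := hlam (n₀ + k + 1) (by omega)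
    have hS : 0 ≤ ∑ j ∈ Icc (n₀ + 1) (n₀ + k), c j := sum_nonneg fun j _ => hc j
    calc d (n₀ + k + 1) ≤ (1 - lam (n₀ + k + 1)) * d (n₀ + k) + c (n₀ + k + 1) := hrec _
      _ ≤ (1 - lam (n₀ + k + 1)) * (d n₀ * ∏ j ∈ Icc (n₀ + 1) (n₀ + k), (1 - lam j)
            + ∑ j ∈ Icc (n₀ + 1) (n₀ + k), c j) + c (n₀ + k + 1) := by
          gcongr
      _ ≤ _ := by nlinarith

theorem prod_one_sub_le_exp_neg_sum {ι : Type*} (s : Finset ι) {f : ι → ℝ} (hf : ∀ i ∈ s, f i ≤ 1) :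
    ∏ i ∈ s, (1 - f i) ≤ Real.exp (-∑ i ∈ s, f i) := by
  rw [← sum_neg_distrib, Real.exp_sum]
  exact prod_le_prod (fun i hi => sub_nonneg.2 (hf i hi)) fun i _ => Real.one_sub_le_exp_neg _

section DivergenceRate

variable {lam : ℕ → ℝ} {θ : ℕ → ℕ}

theorem le_of_rate_of_divergence (hlam : ∀ n, 1 ≤ n → lam n ≤ 1)
    (hθ : ∀ m : ℕ, 1 ≤ m → (m : ℝ) ≤ ∑ n ∈ Icc 1 (θ m), lam n) {m : ℕ} (hm : 1 ≤ m) : m ≤ θ m := by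
  have hsum : ∑ n ∈ Icc 1 (θ m), lam n ≤ θ m := by
    simpa using sum_le_sum fun n hn => hlam n (mem_Icc.1 hn).1
  exact_mod_cast (hθ m hm).trans hsum

theorem le_sum_Icc_of_rate_of_divergence (hlam : ∀ n, 1 ≤ n → lam n ∈ Set.Icc (0 : ℝ) 1)
    (hθ : ∀ m : ℕ, 1 ≤ m → (m : ℝ) ≤ ∑ n ∈ Icc 1 (θ m), lam n) {n₀ K n : ℕ} (hK : 1 ≤ K)
    (hn : θ (n₀ + K) ≤ n) : (K : ℝ) ≤ ∑ j ∈ Icc (n₀ + 1) n, lam j := by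
  have hle : n₀ + K ≤ n :=
    (le_of_rate_of_divergence (fun n hn => (hlam n hn).2) hθ (by omega)).trans hn
  have hθsum : (n₀ + K : ℝ) ≤ ∑ j ∈ Ioc 0 n, lam j := by
    have := hθ (n₀ + K) (by omega)
    push_cast at this
    refine this.trans (sum_le_sum_of_subset_of_nonneg ?_ ?_)
    · rw [← Icc_add_one_left_eq_Ioc]
      exact Icc_subset_Icc_right hn
    · intro j hj _
      exact (hlam j (mem_Icc.1 hj).1).1
  have hhead : ∑ j ∈ Ioc 0 n₀, lam j ≤ n₀ := by
    simpa using sum_le_sum fun j hj => (hlam j (mem_Ioc.1 hj).1).2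
  rw [← sum_Ioc_consecutive _ (Nat.zero_le n₀) (by omega : n₀ ≤ n)] at hθsum
  rw [Icc_add_one_left_eq_Ioc]
  linarith

end DivergenceRate

theorem iterComp_mem {Y : Type*} {C : Set Y} {T : ℕ → Y → Y}
    (hTmap : ∀ n, 1 ≤ n → Set.MapsTo (T n) C C) (n : ℕ) {z : Y} (hz : z ∈ C) (k : ℕ) :
    iterComp T n k z ∈ C := by
  induction k with
  | zero => exact hz
  | succ k ih => exact hTmap (n + k + 1) le_add_self ih

section Halpern

variable {X : Type*} [NormedAddCommGroup X] [NormedSpace ℝ X] {C : Set X} {M : ℝ}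
  {T : ℕ → X → X} {lam : ℕ → ℝ} {u : X} {x : ℕ → X}

theorem halpern_mem (hC : Convex ℝ C) (hu : u ∈ C) (hTmap : ∀ n, 1 ≤ n → Set.MapsTo (T n) C C)
    (hlam : ∀ n, 1 ≤ n → lam n ∈ Set.Icc (0 : ℝ) 1) (hx0 : x 0 = u)
    (hx : ∀ n : ℕ, x (n + 1) = lam (n + 1) • u + (1 - lam (n + 1)) • T (n + 1) (x n)) (n : ℕ) :
    x n ∈ C := by
  induction n with
  | zero => rwa [hx0]
  | succ n ih =>
    obtain ⟨hl₀, hl₁⟩ := hlam (n + 1) (by omega)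
    rw [hx n]
    exact hC hu (hTmap (n + 1) (by omega) ih) hl₀ (sub_nonneg.2 hl₁) (by ring)

theorem norm_halpern_shift_succ_le {N : ℕ} (hdiam : ∀ y ∈ C, ∀ z ∈ C, ‖y - z‖ ≤ M) (hu : u ∈ C)
    (hTmap : ∀ n, 1 ≤ n → Set.MapsTo (T n) C C)
    (hTne : ∀ n, 1 ≤ n → ∀ y ∈ C, ∀ z ∈ C, ‖T n y - T n z‖ ≤ ‖y - z‖)
    (hper : ∀ n, 1 ≤ n → T (n + N) = T n) (hlam : ∀ n, 1 ≤ n → lam n ∈ Set.Icc (0 : ℝ) 1)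
    (hxC : ∀ n, x n ∈ C)
    (hx : ∀ n : ℕ, x (n + 1) = lam (n + 1) • u + (1 - lam (n + 1)) • T (n + 1) (x n)) (n : ℕ) :
    ‖x (n + 1 + N) - x (n + 1)‖ ≤
      (1 - lam (n + 1)) * ‖x (n + N) - x n‖ + 2 * M * |lam (n + 1 + N) - lam (n + 1)| := by
  set Δ := lam (n + 1 + N) - lam (n + 1)
  have hstep : x (n + 1 + N) = lam (n + 1 + N) • u
      + (1 - lam (n + 1 + N)) • T (n + 1) (x (n + N)) := by
    rw [← hper (n + 1) le_add_self, show n + 1 + N = n + N + 1 by ring, hx]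
  have hTx := hTmap (n + 1) le_add_self (hxC n)
  have hlam_le : 1 - lam (n + 1 + N) ≤ 1 - lam (n + 1) + |Δ| := by
    linarith [neg_abs_le Δ]
  calc ‖x (n + 1 + N) - x (n + 1)‖
      ≤ |Δ| * ‖u - T (n + 1) (x n)‖
        + (1 - lam (n + 1 + N)) * ‖T (n + 1) (x (n + N)) - T (n + 1) (x n)‖ := by
        rw [hstep, hx n]
        exact norm_smul_add_one_sub_smul_sub_le (hlam _ (by omega)).2 _ _ _ _
    _ ≤ |Δ| * M + (1 - lam (n + 1) + |Δ|) * ‖x (n + N) - x n‖ := by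
        have hcoef := sub_nonneg.2 (hlam (n + 1 + N) (by omega)).2
        exact add_le_add (mul_le_mul_of_nonneg_left (hdiam _ hu _ hTx) (abs_nonneg Δ))
          (mul_le_mul hlam_le (hTne _ le_add_self _ (hxC _) _ (hxC _)) (norm_nonneg _)
            (hcoef.trans hlam_le))
    _ ≤ _ := by
        have := hdiam _ (hxC (n + N)) _ (hxC n)
        nlinarith [abs_nonneg Δ]

theorem norm_halpern_shift_le_exp_add {N : ℕ} (hdiam : ∀ y ∈ C, ∀ z ∈ C, ‖y - z‖ ≤ M)
    (hu : u ∈ C) (hTmap : ∀ n, 1 ≤ n → Set.MapsTo (T n) C C)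
    (hTne : ∀ n, 1 ≤ n → ∀ y ∈ C, ∀ z ∈ C, ‖T n y - T n z‖ ≤ ‖y - z‖)
    (hper : ∀ n, 1 ≤ n → T (n + N) = T n) (hlam : ∀ n, 1 ≤ n → lam n ∈ Set.Icc (0 : ℝ) 1)
    (hxC : ∀ n, x n ∈ C)
    (hx : ∀ n : ℕ, x (n + 1) = lam (n + 1) • u + (1 - lam (n + 1)) • T (n + 1) (x n))
    (n₀ k : ℕ) :
    ‖x (n₀ + k + N) - x (n₀ + k)‖ ≤ M * Real.exp (-∑ j ∈ Icc (n₀ + 1) (n₀ + k), lam j)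
      + 2 * M * ∑ j ∈ Icc (n₀ + 1) (n₀ + k), |lam (j + N) - lam j| := by
  have hM : 0 ≤ M := (norm_nonneg _).trans (hdiam u hu u hu)
  have hprod := prod_one_sub_le_exp_neg_sum (Icc (n₀ + 1) (n₀ + k)) (f := lam)
    fun j hj => (hlam j (by linarith [(mem_Icc.1 hj).1])).2
  have hprod_nonneg : 0 ≤ ∏ j ∈ Icc (n₀ + 1) (n₀ + k), (1 - lam j) :=
    prod_nonneg fun j hj => sub_nonneg.2 (hlam j (by linarith [(mem_Icc.1 hj).1])).2
  have hunroll := le_prod_mul_add_sum_of_le_one_sub_mul_add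
    (d := fun n => ‖x (n + N) - x n‖) (c := fun n => 2 * M * |lam (n + N) - lam n|) hlam
    (fun n => by positivity)
    (norm_halpern_shift_succ_le hdiam hu hTmap hTne hper hlam hxC hx) n₀ k
  rw [← mul_sum] at hunroll
  calc _ ≤ _ := hunroll
    _ ≤ M * Real.exp (-∑ j ∈ Icc (n₀ + 1) (n₀ + k), lam j)
        + 2 * M * ∑ j ∈ Icc (n₀ + 1) (n₀ + k), |lam (j + N) - lam j| := by
      have := (mul_le_mul_of_nonneg_right (hdiam _ (hxC (n₀ + N)) _ (hxC n₀)) hprod_nonneg).trans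
        (mul_le_mul_of_nonneg_left hprod hM)
      linarith

theorem norm_halpern_sub_iterComp_le (hdiam : ∀ y ∈ C, ∀ z ∈ C, ‖y - z‖ ≤ M) (hu : u ∈ C)
    (hTmap : ∀ n, 1 ≤ n → Set.MapsTo (T n) C C)
    (hTne : ∀ n, 1 ≤ n → ∀ y ∈ C, ∀ z ∈ C, ‖T n y - T n z‖ ≤ ‖y - z‖)
    (hlam : ∀ n, 1 ≤ n → lam n ∈ Set.Icc (0 : ℝ) 1) (hxC : ∀ n, x n ∈ C)
    (hx : ∀ n : ℕ, x (n + 1) = lam (n + 1) • u + (1 - lam (n + 1)) • T (n + 1) (x n))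
    (n k : ℕ) :
    ‖x (n + k) - iterComp T n k (x n)‖ ≤ M * ∑ j ∈ range k, lam (n + j + 1) := by
  induction k with
  | zero => simp [iterComp]
  | succ k ih =>
    set y := iterComp T n k (x n)
    have hy : y ∈ C := iterComp_mem hTmap n (hxC n) k
    have hl := hlam (n + k + 1) (by omega)
    -- a plain step of the composition is a Halpern step with parameter `0`
    have hnext : iterComp T n (k + 1) (x n) = (0 : ℝ) • u + (1 - (0 : ℝ)) • T (n + k + 1) y := by
      simp [iterComp, y]
    calc ‖x (n + (k + 1)) - iterComp T n (k + 1) (x n)‖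
        ≤ |lam (n + k + 1) - 0| * ‖u - T (n + k + 1) y‖
          + (1 - lam (n + k + 1)) * ‖T (n + k + 1) (x (n + k)) - T (n + k + 1) y‖ := by
          rw [hnext, ← add_assoc, hx]
          exact norm_smul_add_one_sub_smul_sub_le hl.2 _ _ _ _
      _ ≤ lam (n + k + 1) * M + 1 * ‖x (n + k) - y‖ := by
          rw [sub_zero, abs_of_nonneg hl.1]
          exact add_le_add (mul_le_mul_of_nonneg_left (hdiam _ hu _ (hTmap _ le_add_self hy)) hl.1)
            (mul_le_mul (by linarith [hl.1]) (hTne _ le_add_self _ (hxC _) _ hy) (norm_nonneg _)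
              zero_le_one)
      _ ≤ M * ∑ j ∈ range (k + 1), lam (n + j + 1) := by
          rw [sum_range_succ]
          linarith

theorem norm_halpern_sub_shift_le {N : ℕ} (hdiam : ∀ y ∈ C, ∀ z ∈ C, ‖y - z‖ ≤ M)
    (hM : 0 < M) (hu : u ∈ C) (hTmap : ∀ n, 1 ≤ n → Set.MapsTo (T n) C C)
    (hTne : ∀ n, 1 ≤ n → ∀ y ∈ C, ∀ z ∈ C, ‖T n y - T n z‖ ≤ ‖y - z‖)
    (hper : ∀ n, 1 ≤ n → T (n + N) = T n) (hlam : ∀ n, 1 ≤ n → lam n ∈ Set.Icc (0 : ℝ) 1)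
    (hxC : ∀ n, x n ∈ C)
    (hx : ∀ n : ℕ, x (n + 1) = lam (n + 1) • u + (1 - lam (n + 1)) • T (n + 1) (x n))
    {θ : ℕ → ℕ} (hθ : ∀ m : ℕ, 1 ≤ m → (m : ℝ) ≤ ∑ n ∈ Icc 1 (θ m), lam n)
    {γ : ℝ → ℕ} (hγ : ∀ ε : ℝ, 0 < ε → ∀ m, 1 ≤ m →
      ∑ n ∈ Icc (γ ε + 1) (γ ε + m), |lam (n + N) - lam n| ≤ ε)
    {ε : ℝ} (hε : 0 < ε) {n : ℕ} (hn : θ (γ (ε / (4 * M)) + max ⌈Real.log (4 * M / ε)⌉₊ 1) ≤ n) :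
    ‖x n - x (n + N)‖ ≤ ε := by
  set n₀ := γ (ε / (4 * M))
  set K := max ⌈Real.log (4 * M / ε)⌉₊ 1
  have hK : 1 ≤ K := le_max_right _ _
  have hsum := le_sum_Icc_of_rate_of_divergence hlam hθ hK hn
  have hle : n₀ + K ≤ n :=
    (le_of_rate_of_divergence (fun n hn => (hlam n hn).2) hθ (by omega)).trans hn
  obtain ⟨k, rfl⟩ := Nat.exists_eq_add_of_le (le_of_add_le_left hle)
  have hexp : Real.exp (-∑ j ∈ Icc (n₀ + 1) (n₀ + k), lam j) ≤ ε / (4 * M) := by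
    have hlog : Real.log (4 * M / ε) ≤ ∑ j ∈ Icc (n₀ + 1) (n₀ + k), lam j :=
      (Nat.le_ceil _).trans ((Nat.cast_le.2 (le_max_left _ 1)).trans hsum)
    calc Real.exp (-∑ j ∈ Icc (n₀ + 1) (n₀ + k), lam j) ≤ Real.exp (-Real.log (4 * M / ε)) :=
          Real.exp_le_exp.2 (neg_le_neg hlog)
      _ = ε / (4 * M) := by rw [Real.exp_neg, Real.exp_log (by positivity), inv_div]
  have hvar := hγ (ε / (4 * M)) (by positivity) k (by omega)
  calc ‖x (n₀ + k) - x (n₀ + k + N)‖ = ‖x (n₀ + k + N) - x (n₀ + k)‖ := norm_sub_rev _ _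
    _ ≤ M * Real.exp (-∑ j ∈ Icc (n₀ + 1) (n₀ + k), lam j)
        + 2 * M * ∑ j ∈ Icc (n₀ + 1) (n₀ + k), |lam (j + N) - lam j| :=
      norm_halpern_shift_le_exp_add hdiam hu hTmap hTne hper hlam hxC hx n₀ k
    _ ≤ M * (ε / (4 * M)) + 2 * M * (ε / (4 * M)) := by gcongr
    _ = 3 * ε / 4 := by field_simp; ring
    _ ≤ ε := by linarith

end Halpern

theorem stmt_5_general {X : Type*} [NormedAddCommGroup X] [NormedSpace ℝ X]
    (N : ℕ) (hN : 1 ≤ N) (C : Set X) (hC : Convex ℝ C)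
    (M : ℝ) (hM : 0 < M) (hdiam : ∀ x ∈ C, ∀ y ∈ C, ‖x - y‖ ≤ M)
    (T : ℕ → X → X)
    (hTmap : ∀ i, 1 ≤ i → i ≤ N → Set.MapsTo (T i) C C)
    (hTne : ∀ i, 1 ≤ i → i ≤ N → ∀ x ∈ C, ∀ y ∈ C, ‖T i x - T i y‖ ≤ ‖x - y‖)
    (hcyc : ∀ n, 1 ≤ n → T n = T ((n - 1) % N + 1))
    (lam : ℕ → ℝ) (hlam : ∀ n, 1 ≤ n → lam n ∈ Set.Icc (0 : ℝ) 1)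
    (u : X) (hu : u ∈ C) (x : ℕ → X) (hx0 : x 0 = u)
    (hx : ∀ n : ℕ, x (n + 1) = lam (n + 1) • u + (1 - lam (n + 1)) • T (n + 1) (x n))
    (θ : ℕ → ℕ)
    (hθ : ∀ m : ℕ, 1 ≤ m → (m : ℝ) ≤ ∑ n ∈ Finset.Icc 1 (θ m), lam n)
    (γ : ℝ → ℕ)
    (hγ : ∀ ε : ℝ, 0 < ε → ∀ m, 1 ≤ m →
      ∑ n ∈ Finset.Icc (γ ε + 1) (γ ε + m), |lam (n + N) - lam n| ≤ ε)
    (α : ℝ → ℕ)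
    (hα : ∀ ε : ℝ, 0 < ε → ∀ n : ℕ, α ε ≤ n → lam (n + 1) ≤ ε) :
    ∀ ε : ℝ, 0 < ε →
      (∀ n : ℕ, θ (γ (ε / (4 * M)) + max ⌈Real.log (4 * M / ε)⌉₊ 1) ≤ n →
        ‖x n - x (n + N)‖ ≤ ε) ∧
      (∀ n : ℕ,
        max (θ (γ (ε / 2 / (4 * M)) + max ⌈Real.log (4 * M / (ε / 2))⌉₊ 1))
          (α (ε / (4 * M * N))) ≤ n →
        ‖x n - iterComp T n N (x n)‖ ≤ ε) := by
  have hTmap' := forall_of_cyclic (P := fun f => Set.MapsTo f C C) hN hcyc hTmap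
  have hTne' := forall_of_cyclic (P := fun f => ∀ y ∈ C, ∀ z ∈ C, ‖f y - f z‖ ≤ ‖y - z‖)
    hN hcyc hTne
  have hxC := halpern_mem hC hu hTmap' hlam hx0 hx
  have hshift {ε : ℝ} (hε : 0 < ε) {n : ℕ} :=
    norm_halpern_sub_shift_le hdiam hM hu hTmap' hTne' (fun _ hn => cyclic_add_period hcyc hn)
      hlam hxC hx hθ hγ hε (n := n)
  refine fun ε hε => ⟨fun n => hshift hε, fun n hn => ?_⟩
  have hNpos : (0 : ℝ) < N := by exact_mod_cast hN
  have htail : ∑ j ∈ range N, lam (n + j + 1) ≤ ε / (4 * M) := by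
    calc ∑ j ∈ range N, lam (n + j + 1) ≤ (range N).card • (ε / (4 * M * N)) :=
          sum_le_card_nsmul _ _ _ fun j _ =>
            hα _ (by positivity) (n + j) ((le_max_right _ _).trans (hn.trans le_self_add))
      _ = ε / (4 * M) := by rw [card_range, nsmul_eq_mul]; field_simp
  calc ‖x n - iterComp T n N (x n)‖
      ≤ ‖x n - x (n + N)‖ + ‖x (n + N) - iterComp T n N (x n)‖ :=
        norm_sub_le_norm_sub_add_norm_sub _ _ _
    _ ≤ ε / 2 + M * (ε / (4 * M)) :=
        add_le_add (hshift (half_pos hε) ((le_max_left _ _).trans hn))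
          ((norm_halpern_sub_iterComp_le hdiam hu hTmap' hTne' hlam hxC hx n N).trans (by gcongr))
    _ = 3 * ε / 4 := by field_simp; ring
    _ ≤ ε := by linarith

/-- Uniform rates of asymptotic regularity for the cyclic Halpern iteration
`x 0 = u`, `x (n+1) = λ_{n+1} • u + (1 - λ_{n+1}) • T_{n+1} (x n)` on a nonempty
bounded convex set of diameter at most `M`. -/
theorem stmt_5 {X : Type*} [NormedAddCommGroup X] [NormedSpace ℝ X]
    (N : ℕ) (hN : 1 ≤ N) (C : Set X) (hCne : C.Nonempty) (hC : Convex ℝ C)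
    (M : ℝ) (hM : 0 < M) (hdiam : ∀ x ∈ C, ∀ y ∈ C, ‖x - y‖ ≤ M)
    (T : ℕ → X → X)
    (hTmap : ∀ i, 1 ≤ i → i ≤ N → Set.MapsTo (T i) C C)
    (hTne : ∀ i, 1 ≤ i → i ≤ N → ∀ x ∈ C, ∀ y ∈ C, ‖T i x - T i y‖ ≤ ‖x - y‖)
    (hcyc : ∀ n, 1 ≤ n → T n = T ((n - 1) % N + 1))
    (lam : ℕ → ℝ) (hlam : ∀ n, 1 ≤ n → lam n ∈ Set.Icc (0 : ℝ) 1)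
    (u : X) (hu : u ∈ C) (x : ℕ → X) (hx0 : x 0 = u)
    (hx : ∀ n : ℕ, x (n + 1) = lam (n + 1) • u + (1 - lam (n + 1)) • T (n + 1) (x n))
    (θ : ℕ → ℕ)
    (hθ : ∀ m : ℕ, 1 ≤ m → (m : ℝ) ≤ ∑ n ∈ Finset.Icc 1 (θ m), lam n)
    (γ : ℝ → ℕ)
    (hγ : ∀ ε : ℝ, 0 < ε → ∀ m, 1 ≤ m →
      ∑ n ∈ Finset.Icc (γ ε + 1) (γ ε + m), |lam (n + N) - lam n| ≤ ε)
    (α : ℝ → ℕ)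
    (hα : ∀ ε : ℝ, 0 < ε → ∀ n : ℕ, α ε ≤ n → lam (n + 1) ≤ ε) :
    ∀ ε : ℝ, 0 < ε →
      (∀ n : ℕ, θ (γ (ε / (4 * M)) + max ⌈Real.log (4 * M / ε)⌉₊ 1) ≤ n →
        ‖x n - x (n + N)‖ ≤ ε) ∧
      (∀ n : ℕ,
        max (θ (γ (ε / 2 / (4 * M)) + max ⌈Real.log (4 * M / (ε / 2))⌉₊ 1))
          (α (ε / (4 * M * N))) ≤ n →
        ‖x n - iterComp T n N (x n)‖ ≤ ε) :=
  stmt_5_general N hN C hC M hM hdiam T hTmap hTne hcyc lam hlam u hu x hx0 hx θ hθ γ hγ α hα
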